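/- Let 2 ≤ y < z be real numbers and, for positive integers r and n, let b_r(n) denote the number of r-tuples (p₁, …, p_r) of primes with y < p_i < z for every i and p₁⋯p_r = n. Let k ≥ 2 and s ≥ 1 be integers and let ℓ be a positive integer with Ω(ℓ) = s (where Ω counts prime factors with multiplicity). Then b_{ks}(ℓ^k) ≤ ((ks)!/(s!)^k)·(b_s(ℓ))^k. -/

import Mathlib

open scoped Classical

/-- `b_r(n)`: the number of `r`-tuples `(p₁, …, p_r)` of primes with `y < pᵢ < z` for every `i`
and `p₁ ⋯ p_r = n`. -/
noncomputable def bCount (y z : ℝ) (r n : ℕ) : ℕ :=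
  Nat.card {t : Fin r → ℕ //
    (∀ i, (t i).Prime ∧ y < (t i : ℝ) ∧ (t i : ℝ) < z) ∧ ∏ i, t i = n}

/-!
If a prime factor of `ℓ` lies outside `(y, z)`, it divides `ℓ ^ k` and the left-hand side
vanishes. Otherwise, by unique factorisation, the tuples counted by `b_r(n)` are exactly the
rearrangements `g ∘ σ` of any one of them, `g`, so orbit–stabiliser gives `b_r(n) · |Stab g| = r!`.
Taking for `ℓ ^ k` the `k`-fold repetition of a tuple `g` for `ℓ`, its stabiliser contains `k`
independent copies of `Stab g`, whence `b_{ks}(ℓ^k) · (s!)^k ≤ (ks)! · b_s(ℓ)^k`.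
-/

open Equiv MulAction
open scoped Nat

theorem List.ofFn_perm_ofFn_iff {α : Type*} [LinearOrder α] {m : ℕ} {f g : Fin m → α} :
    (List.ofFn f).Perm (List.ofFn g) ↔ ∃ σ : Equiv.Perm (Fin m), f = g ∘ σ := by
  refine ⟨fun h ↦ ?_, fun ⟨σ, hσ⟩ ↦ hσ ▸ σ.ofFn_comp_perm g⟩
  have hsorted : f ∘ Tuple.sort f = g ∘ Tuple.sort g :=
    List.ofFn_injective <| List.Perm.eq_of_sortedLE (Tuple.monotone_sort f).sortedLE_ofFn
      (Tuple.monotone_sort g).sortedLE_ofFn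
      (((Tuple.sort f).ofFn_comp_perm f).trans (h.trans ((Tuple.sort g).ofFn_comp_perm g).symm))
  refine ⟨(Tuple.sort f)⁻¹.trans (Tuple.sort g), funext fun i ↦ ?_⟩
  simpa using congrFun hsorted ((Tuple.sort f)⁻¹ i)

theorem Nat.card_perm_comp_eq_of_equiv {α ι ι' : Type*} (e : ι ≃ ι') (f : ι' → α) :
    Nat.card {σ : Perm ι // (f ∘ e) ∘ σ = f ∘ e} = Nat.card {τ : Perm ι' // f ∘ τ = f} := by
  refine Nat.card_congr (subtypeEquiv e.permCongr fun σ ↦ ?_)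
  simp only [funext_iff, Function.comp_apply, permCongr_apply]
  exact ⟨fun h x ↦ by simpa using h (e.symm x), fun h x ↦ by simpa using h (e x)⟩

theorem Nat.card_perm_comp_eq_pow_le {α ι κ : Type*} [Finite ι] [Finite κ] (f : ι → α) :
    Nat.card {σ : Perm ι // f ∘ σ = f} ^ Nat.card κ ≤
      Nat.card {τ : Perm (κ × ι) // (f ∘ Prod.snd) ∘ τ = f ∘ Prod.snd} := by
  let Φ : (κ → {σ : Perm ι // f ∘ σ = f}) →
      {τ : Perm (κ × ι) // (f ∘ Prod.snd) ∘ τ = f ∘ Prod.snd} := fun σ ↦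
    ⟨prodCongrRight fun a ↦ (σ a).1, funext fun x ↦ congrFun (σ x.1).2 x.2⟩
  have hΦ : Function.Injective Φ := fun σ σ' h ↦ funext fun a ↦ Subtype.ext <| Equiv.ext fun b ↦
    congrArg Prod.snd (DFunLike.congr_fun (Subtype.ext_iff.1 h) (a, b))
  rw [← Nat.card_fun]
  exact Nat.card_le_card_of_injective Φ hΦ

def IsFactorTuple (y z : ℝ) (n : ℕ) {r : ℕ} (t : Fin r → ℕ) : Prop :=
  (∀ i, (t i).Prime ∧ y < (t i : ℝ) ∧ (t i : ℝ) < z) ∧ ∏ i, t i = n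

theorem bCount_eq_zero_of_prime_dvd {y z : ℝ} {r n p : ℕ} (hp : p.Prime) (hpn : p ∣ n)
    (hout : ¬(y < p ∧ (p : ℝ) < z)) : bCount y z r n = 0 := by
  refine Nat.card_eq_zero.2 (Or.inl ⟨fun ⟨t, ht, hprod⟩ ↦ ?_⟩)
  obtain ⟨i, -, hpi⟩ := (Prime.dvd_finsetProd_iff hp.prime t).1 (hprod ▸ hpn)
  rw [(Nat.prime_dvd_prime_iff_eq hp (ht i).1).1 hpi] at hout
  exact hout (ht i).2

theorem isFactorTuple_get_primeFactorsList {y z : ℝ} {n : ℕ} (hn : n ≠ 0)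
    (hrange : ∀ p ∈ n.primeFactorsList, y < p ∧ (p : ℝ) < z) :
    IsFactorTuple y z n n.primeFactorsList.get := by
  refine ⟨fun i ↦ ⟨Nat.prime_of_mem_primeFactorsList (List.get_mem _ i),
    hrange _ (List.get_mem _ i)⟩, ?_⟩
  rw [← List.prod_ofFn, List.ofFn_get, Nat.prod_primeFactorsList hn]

namespace IsFactorTuple

variable {y z : ℝ} {n r : ℕ} {t g : Fin r → ℕ}

theorem ofFn_perm_primeFactorsList (ht : IsFactorTuple y z n t) :
    (List.ofFn t).Perm n.primeFactorsList :=
  Nat.primeFactorsList_unique (by rw [List.prod_ofFn]; exact ht.2)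
    fun p hp ↦ by obtain ⟨i, rfl⟩ := List.mem_ofFn.1 hp; exact (ht.1 i).1

theorem comp_perm (hg : IsFactorTuple y z n g) (σ : Perm (Fin r)) :
    IsFactorTuple y z n (g ∘ σ) :=
  ⟨fun i ↦ hg.1 (σ i), (Equiv.prod_comp σ g).trans hg.2⟩

theorem iff_exists_perm (hg : IsFactorTuple y z n g) :
    IsFactorTuple y z n t ↔ ∃ σ : Perm (Fin r), t = g ∘ σ := by
  refine ⟨fun ht ↦ List.ofFn_perm_ofFn_iff.1 ?_, fun ⟨σ, hσ⟩ ↦ hσ ▸ hg.comp_perm σ⟩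
  exact ht.ofFn_perm_primeFactorsList.trans hg.ofFn_perm_primeFactorsList.symm

theorem bCount_mul_card_stabilizer (hg : IsFactorTuple y z n g) :
    bCount y z r n * Nat.card {σ : Perm (Fin r) // g ∘ σ = g} = r ! := by
  have horbit : bCount y z r n = Nat.card (orbit (Perm (Fin r))ᵈᵐᵃ g) :=
    Nat.card_congr <| subtypeEquivRight fun t ↦ hg.iff_exists_perm.trans
      ⟨fun ⟨σ, h⟩ ↦ ⟨DomMulAct.mk σ, h.symm⟩, fun ⟨x, h⟩ ↦ ⟨DomMulAct.mk.symm x, h.symm⟩⟩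
  have hstab : Nat.card {σ : Perm (Fin r) // g ∘ σ = g} =
      Nat.card (stabilizer (Perm (Fin r))ᵈᵐᵃ g) :=
    Nat.card_congr (subtypeEquiv DomMulAct.mk fun _ ↦ Iff.rfl)
  rw [horbit, hstab, ← Nat.card_prod, Nat.card_congr (orbitProdStabilizerEquivGroup _ g),
    Nat.card_congr DomMulAct.mk.symm, Nat.card_perm, Nat.card_fin]

theorem replicate (hg : IsFactorTuple y z n g) (k : ℕ) :
    IsFactorTuple y z (n ^ k) ((g ∘ Prod.snd) ∘ (finProdFinEquiv (m := k)).symm) := by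
  refine ⟨fun i ↦ hg.1 _, ?_⟩
  refine (Equiv.prod_comp finProdFinEquiv.symm (g ∘ Prod.snd)).trans ?_
  simp [Fintype.prod_prod_type, hg.2]

theorem bCount_pow_mul_le (hg : IsFactorTuple y z n g) (k : ℕ) :
    bCount y z (k * r) (n ^ k) * r ! ^ k ≤ (k * r)! * bCount y z r n ^ k := by
  have hstab := Nat.card_perm_comp_eq_pow_le (κ := Fin k) g
  rw [Nat.card_fin, ← Nat.card_perm_comp_eq_of_equiv
    (finProdFinEquiv (m := k) (n := r)).symm (g ∘ Prod.snd)] at hstab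
  calc bCount y z (k * r) (n ^ k) * r ! ^ k
      = bCount y z r n ^ k * (bCount y z (k * r) (n ^ k) *
          Nat.card {σ : Perm (Fin r) // g ∘ σ = g} ^ k) := by
        rw [← hg.bCount_mul_card_stabilizer]; ring
    _ ≤ bCount y z r n ^ k * (k * r)! := by
        rw [← (hg.replicate k).bCount_mul_card_stabilizer]; gcongr
    _ = (k * r)! * bCount y z r n ^ k := mul_comm _ _

end IsFactorTuple

theorem stmt_14_general (y z : ℝ) (k s : ℕ) (hk : 2 ≤ k)
    (ℓ : ℕ) (hℓ : 0 < ℓ) (hΩ : ℓ.primeFactorsList.length = s) :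
    (bCount y z (k * s) (ℓ ^ k) : ℝ) ≤
      ((k * s).factorial : ℝ) / (s.factorial : ℝ) ^ k * (bCount y z s ℓ : ℝ) ^ k := by
  subst hΩ
  by_cases hrange : ∀ p ∈ ℓ.primeFactorsList, y < p ∧ (p : ℝ) < z
  · have hnat := (isFactorTuple_get_primeFactorsList hℓ.ne' hrange).bCount_pow_mul_le k
    rw [div_mul_eq_mul_div, le_div_iff₀ (by positivity)]
    exact_mod_cast hnat
  · obtain ⟨p, hp, hout⟩ := not_forall₂.1 hrange
    rw [bCount_eq_zero_of_prime_dvd (Nat.prime_of_mem_primeFactorsList hp)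
      (dvd_pow (Nat.dvd_of_mem_primeFactorsList hp) (by omega)) hout]
    push_cast
    positivity

/-- Let `k ≥ 2`, `s ≥ 1` and `ℓ` a positive integer with `Ω(ℓ) = s`. Then
`b_{ks}(ℓ^k) ≤ ((ks)!/(s!)^k) (b_s(ℓ))^k`. -/
theorem stmt_14 (y z : ℝ) (hy : 2 ≤ y) (hyz : y < z) (k s : ℕ) (hk : 2 ≤ k) (hs : 1 ≤ s)
    (ℓ : ℕ) (hℓ : 0 < ℓ) (hΩ : ℓ.primeFactorsList.length = s) :
    (bCount y z (k * s) (ℓ ^ k) : ℝ) ≤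
      ((k * s).factorial : ℝ) / (s.factorial : ℝ) ^ k * (bCount y z s ℓ : ℝ) ^ k :=
  stmt_14_general y z k s hk ℓ hℓ hΩ
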